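/- arXiv:1310.0404 — 5 statements merged into one kernel-verified Lean document; each statement's English description precedes it below -/
import Mathlib

section
/- Let α : ℝ → ℝ be differentiable with α₀ ≤ α(y) ≤ α₁ for all y, where 0 < α₀ ≤ α₁ < 2. Fix x ∈ ℝ and assume M := sup_{|y−x|≤3} |α′(y)| < ∞. Then for every R ∈ (0, 1], sup_{|y−x|≤3R} R^{−α(y)} ≤ 64^M · inf_{|y−x|≤3R} R^{−α(y)}. In particular, sup_{|y−x|≤2R} R^{−α(y)} ≤ 64^M · inf_{|y−x|≤3R} R^{−α(y)}, i.e. the stable-like family p^U(y, ξ) = |ξ|^{α(y)} satisfies the comparability condition (A2) with κ(x) = 64^M. -/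
/-!
By the mean value theorem, `α` oscillates by at most `6RM` on the ball `|y - x| ≤ 3R`, so
any two values of `R ^ (-α y)` there differ by a factor at most `R ^ (-6RM) = (R ^ (-R)) ^ (6M)`.
Bernoulli's inequality gives `R ^ (-R) = (1 + (R⁻¹ - 1)) ^ R ≤ 2 - R ≤ 2`, hence the factor is at
most `2 ^ (6M) = 64 ^ M`.
-/

open Real Set

lemma rpow_neg_self_le_two {R : ℝ} (hR : 0 < R) (hR1 : R ≤ 1) : R ^ (-R) ≤ 2 := by
  have hbernoulli : (1 + (R⁻¹ - 1)) ^ R ≤ 1 + R * (R⁻¹ - 1) :=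
    rpow_one_add_le_one_add_mul_self (by linarith [inv_pos.2 hR]) hR.le hR1
  rw [add_sub_cancel, inv_rpow hR.le, ← rpow_neg hR.le, mul_sub, mul_inv_cancel₀ hR.ne'] at hbernoulli
  linarith

lemma rpow_neg_mul_self_le_two_rpow {R c : ℝ} (hR : 0 < R) (hR1 : R ≤ 1) (hc : 0 ≤ c) :
    R ^ (-(R * c)) ≤ 2 ^ c := by
  rw [← neg_mul, rpow_mul hR.le]
  exact rpow_le_rpow (rpow_nonneg hR.le _) (rpow_neg_self_le_two hR hR1) hc

lemma rpow_neg_le_two_rpow_mul_rpow_neg {R a b c : ℝ} (hR : 0 < R) (hR1 : R ≤ 1) (hc : 0 ≤ c)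
    (hab : a - b ≤ R * c) : R ^ (-a) ≤ 2 ^ c * R ^ (-b) :=
  calc R ^ (-a) = R ^ (b - a) * R ^ (-b) := by rw [← rpow_add hR]; ring_nf
    _ ≤ R ^ (-(R * c)) * R ^ (-b) :=
      mul_le_mul_of_nonneg_right (rpow_le_rpow_of_exponent_ge hR hR1 (by linarith))
        (rpow_nonneg hR.le _)
    _ ≤ 2 ^ c * R ^ (-b) :=
      mul_le_mul_of_nonneg_right (rpow_neg_mul_self_le_two_rpow hR hR1 hc) (rpow_nonneg hR.le _)

lemma abs_sub_le_sSup_abs_deriv_mul {f : ℝ → ℝ} {s : Set ℝ} (hs : Convex ℝ s)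
    (hf : Differentiable ℝ f) (hbdd : BddAbove ((fun y => |deriv f y|) '' s)) {y z : ℝ}
    (hy : y ∈ s) (hz : z ∈ s) : |f z - f y| ≤ sSup ((fun y => |deriv f y|) '' s) * |z - y| :=
  hs.norm_image_sub_le_of_norm_deriv_le (fun w _ => hf w)
    (fun w hw => le_csSup hbdd ⟨w, hw, rfl⟩) hy hz

lemma csSup_image_le_mul_csInf_image {ι : Type*} {f : ι → ℝ} {S T : Set ι} {K : ℝ} (hK : 0 < K)
    (hS : S.Nonempty) (hT : T.Nonempty) (h : ∀ y ∈ S, ∀ z ∈ T, f y ≤ K * f z) :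
    sSup (f '' S) ≤ K * sInf (f '' T) := by
  refine csSup_le (hS.image f) (forall_mem_image.2 fun y hy => ?_)
  rw [← div_le_iff₀' hK]
  refine le_csInf (hT.image f) (forall_mem_image.2 fun z hz => ?_)
  rw [div_le_iff₀' hK]
  exact h y hy z hz

theorem stable_like_comparability_general (α : ℝ → ℝ)
    (hdiff : Differentiable ℝ α)
    (x M : ℝ)
    (hbdd : BddAbove ((fun y => |deriv α y|) '' {y | |y - x| ≤ 3}))
    (hM : M = sSup ((fun y => |deriv α y|) '' {y | |y - x| ≤ 3})) :
    ∀ R : ℝ, 0 < R → R ≤ 1 →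
      sSup ((fun y => R ^ (-α y)) '' {y | |y - x| ≤ 3 * R}) ≤
        (64 : ℝ) ^ M * sInf ((fun y => R ^ (-α y)) '' {y | |y - x| ≤ 3 * R}) ∧
      sSup ((fun y => R ^ (-α y)) '' {y | |y - x| ≤ 2 * R}) ≤
        (64 : ℝ) ^ M * sInf ((fun y => R ^ (-α y)) '' {y | |y - x| ≤ 3 * R}) := by
  intro R hR hR1
  have hball : {y : ℝ | |y - x| ≤ 3} = Metric.closedBall x 3 := by ext; simp [Real.dist_eq]
  have hM0 : 0 ≤ M := hM ▸ (abs_nonneg _).trans (le_csSup hbdd ⟨x, by simp, rfl⟩)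
  have hosc : ∀ y z, |y - x| ≤ 3 * R → |z - x| ≤ 3 * R → α y - α z ≤ R * (6 * M) := by
    intro y z hy hz
    have hlip := abs_sub_le_sSup_abs_deriv_mul (hball ▸ convex_closedBall x 3) hdiff hbdd
      (show |z - x| ≤ 3 by linarith) (show |y - x| ≤ 3 by linarith)
    rw [← hM] at hlip
    have hyz : |y - z| ≤ 6 * R := by linarith [abs_sub_le y x z, abs_sub_comm x z]
    nlinarith [le_abs_self (α y - α z)]
  have key : ∀ y ∈ {y | |y - x| ≤ 3 * R}, ∀ z ∈ {y | |y - x| ≤ 3 * R},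
      R ^ (-α y) ≤ (64 : ℝ) ^ M * R ^ (-α z) := fun y hy z hz => by
    rw [show (64 : ℝ) ^ M = 2 ^ (6 * M) by rw [rpow_mul zero_le_two]; norm_num]
    exact rpow_neg_le_two_rpow_mul_rpow_neg hR hR1 (by positivity) (hosc y z hy hz)
  have hne : ∀ c : ℝ, 0 ≤ c → {y : ℝ | |y - x| ≤ c * R}.Nonempty :=
    fun c hc => ⟨x, by simpa using mul_nonneg hc hR.le⟩
  have hK : 0 < (64 : ℝ) ^ M := by positivity
  exact ⟨csSup_image_le_mul_csInf_image hK (hne 3 zero_le_three) (hne 3 zero_le_three) key,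
    csSup_image_le_mul_csInf_image hK (hne 2 zero_le_two) (hne 3 zero_le_three)
      fun y hy => key y (hy.trans (by linarith : 2 * R ≤ 3 * R))⟩

/-- For a differentiable index function `α : ℝ → [α₀, α₁] ⊂ (0,2)` with
`M = sup_{|y−x|≤3} |α'(y)| < ∞`, the stable-like family `p^U(y, 1/R) = R^{−α(y)}`
satisfies the comparability condition (A2): for all `R ∈ (0,1]`,
`sup_{|y−x|≤3R} R^{−α(y)} ≤ 64^M · inf_{|y−x|≤3R} R^{−α(y)}`, and in particular
`sup_{|y−x|≤2R} R^{−α(y)} ≤ 64^M · inf_{|y−x|≤3R} R^{−α(y)}`. -/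
theorem stable_like_comparability (α : ℝ → ℝ) (α₀ α₁ : ℝ)
    (h0 : 0 < α₀) (h01 : α₀ ≤ α₁) (h1 : α₁ < 2)
    (hdiff : Differentiable ℝ α) (hrange : ∀ y, α₀ ≤ α y ∧ α y ≤ α₁)
    (x M : ℝ)
    (hbdd : BddAbove ((fun y => |deriv α y|) '' {y | |y - x| ≤ 3}))
    (hM : M = sSup ((fun y => |deriv α y|) '' {y | |y - x| ≤ 3})) :
    ∀ R : ℝ, 0 < R → R ≤ 1 →
      sSup ((fun y => R ^ (-α y)) '' {y | |y - x| ≤ 3 * R}) ≤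
        (64 : ℝ) ^ M * sInf ((fun y => R ^ (-α y)) '' {y | |y - x| ≤ 3 * R}) ∧
      sSup ((fun y => R ^ (-α y)) '' {y | |y - x| ≤ 2 * R}) ≤
        (64 : ℝ) ^ M * sInf ((fun y => R ^ (-α y)) '' {y | |y - x| ≤ 3 * R}) :=
  stable_like_comparability_general α hdiff x M hbdd hM
end

section
/- Let 0 < α₀ ≤ α₁ < 2 and let α : ℝ → [α₀, α₁] be continuously differentiable with bounded derivative. Fix x ∈ ℝ, c₁ > 0 and ρ₀ ∈ (0,1), and let f : (0, ρ₀) → (0, 1) be a function satisfying, for every ρ ∈ (0, ρ₀): f(ρ)^{α(x − 3 f(ρ))} = ρ and f(ρ) ≤ c₁ · ρ^{1/α₁}. Then lim_{ρ → 0⁺} ρ^{1/α(x)} / f(ρ) = 1. -/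
/-! Writing `r = f ρ`, the defining equation `r ^ α(x - 3r) = ρ` gives
`ρ ^ (1/α(x)) / r = r ^ e(r)` with `e(r) = (α(x - 3r) - α(x)) / α(x)`. Since `α` is differentiable,
`e(r) = O(r)`, so `e(r) log r = O(r log r) → 0`; and the bound `f ρ ≤ c₁ ρ ^ (1/α₁)` makes
`r = f ρ → 0⁺` as `ρ → 0⁺`. -/

open Filter Topology Asymptotics Real

theorem tendsto_rpow_nhdsGT_zero_of_isBigO {e : ℝ → ℝ} (he : e =O[𝓝[>] 0] fun r => r) :
    Tendsto (fun r => r ^ e r) (𝓝[>] 0) (𝓝 1) := by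
  have hmul : Tendsto (fun r => r * log r) (𝓝[>] 0) (𝓝 0) := by
    simpa using (continuous_mul_log.tendsto 0).mono_left nhdsWithin_le_nhds
  have hlog : Tendsto (fun r => e r * log r) (𝓝[>] 0) (𝓝 0) :=
    (he.mul (isBigO_refl log _)).trans_tendsto hmul
  rw [← exp_zero]
  refine ((continuous_exp.tendsto 0).comp hlog).congr' ?_
  filter_upwards [self_mem_nhdsWithin] with r hr
  rw [Function.comp_apply, rpow_def_of_pos hr, mul_comm]

theorem tendsto_nhdsGT_zero_of_le_mul_rpow {f : ℝ → ℝ} {c p : ℝ} (hp : 0 < p)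
    (hf : ∀ᶠ ρ in 𝓝[>] 0, 0 < f ρ ∧ f ρ ≤ c * ρ ^ p) : Tendsto f (𝓝[>] 0) (𝓝[>] 0) := by
  have hbound : Tendsto (fun ρ : ℝ => c * ρ ^ p) (𝓝[>] 0) (𝓝 0) := by
    have := ((continuousAt_rpow_const 0 p (Or.inr hp.le)).const_mul c).tendsto
    rw [zero_rpow hp.ne', mul_zero] at this
    exact this.mono_left nhdsWithin_le_nhds
  refine tendsto_nhdsWithin_of_tendsto_nhds_of_eventually_within _ ?_ (hf.mono fun _ h => h.1)
  exact squeeze_zero' (hf.mono fun _ h => h.1.le) (hf.mono fun _ h => h.2) hbound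

theorem rpow_rpow_one_div_div_self {r a : ℝ} (b : ℝ) (hr : 0 < r) (ha : a ≠ 0) :
    (r ^ b) ^ (1 / a) / r = r ^ ((b - a) / a) := by
  rw [← rpow_mul hr.le, sub_div, div_self ha, rpow_sub hr, rpow_one, mul_one_div]

theorem inverse_norming_asymptotics_general (α₀ α₁ : ℝ) (h0 : 0 < α₀) (h01 : α₀ ≤ α₁)
    (α : ℝ → ℝ) (hα : ContDiff ℝ 1 α)
    (hrange : ∀ y, α y ∈ Set.Icc α₀ α₁)
    (x c₁ ρ₀ : ℝ) (hρ₀ : 0 < ρ₀)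
    (f : ℝ → ℝ)
    (hf : ∀ ρ : ℝ, 0 < ρ → ρ < ρ₀ →
      0 < f ρ ∧ f ρ < 1 ∧ f ρ ^ α (x - 3 * f ρ) = ρ ∧ f ρ ≤ c₁ * ρ ^ (1 / α₁)) :
    Filter.Tendsto (fun ρ => ρ ^ (1 / α x) / f ρ) (nhdsWithin 0 (Set.Ioi 0)) (nhds 1) := by
  have hαx : 0 < α x := h0.trans_le (hrange x).1
  have hsmall : ∀ᶠ ρ in 𝓝[>] 0, 0 < ρ ∧ ρ < ρ₀ := Ioo_mem_nhdsGT hρ₀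
  have hf0 : Tendsto f (𝓝[>] 0) (𝓝[>] 0) :=
    tendsto_nhdsGT_zero_of_le_mul_rpow (one_div_pos.2 (h0.trans_le h01)) <|
      hsmall.mono fun ρ hρ => ⟨(hf ρ hρ.1 hρ.2).1, (hf ρ hρ.1 hρ.2).2.2.2⟩
  set e : ℝ → ℝ := fun r => (α (x - 3 * r) - α x) / α x
  have he : e =O[𝓝[>] 0] fun r => r := by
    have hdiff : DifferentiableAt ℝ e 0 := by
      have := hα.differentiable one_ne_zero
      fun_prop
    simpa [e] using hdiff.isBigO_sub.mono nhdsWithin_le_nhds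
  refine ((tendsto_rpow_nhdsGT_zero_of_isBigO he).comp hf0).congr' ?_
  filter_upwards [hsmall] with ρ hρ
  obtain ⟨hpos, -, heq, -⟩ := hf ρ hρ.1 hρ.2
  calc f ρ ^ e (f ρ) = (f ρ ^ α (x - 3 * f ρ)) ^ (1 / α x) / f ρ :=
        (rpow_rpow_one_div_div_self _ hpos hαx.ne').symm
    _ = ρ ^ (1 / α x) / f ρ := by rw [heq]

/-- For a stable-like index `α : ℝ → [α₀,α₁] ⊂ (0,2)`, continuously differentiable
with bounded derivative, if `f(ρ)` (the generalized inverse of `u(x,R) = R^{α(x−3R)}`)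
satisfies `f(ρ)^{α(x − 3f(ρ))} = ρ` and `f(ρ) ≤ c₁ ρ^{1/α₁}` on `(0, ρ₀)`, then
`ρ^{1/α(x)} / f(ρ) → 1` as `ρ → 0⁺`. -/
theorem inverse_norming_asymptotics (α₀ α₁ : ℝ) (h0 : 0 < α₀) (h01 : α₀ ≤ α₁) (h1 : α₁ < 2)
    (α : ℝ → ℝ) (hα : ContDiff ℝ 1 α) (K : ℝ) (hK : ∀ y, |deriv α y| ≤ K)
    (hrange : ∀ y, α y ∈ Set.Icc α₀ α₁)
    (x c₁ ρ₀ : ℝ) (hc₁ : 0 < c₁) (hρ₀ : 0 < ρ₀) (hρ₀1 : ρ₀ < 1)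
    (f : ℝ → ℝ)
    (hf : ∀ ρ : ℝ, 0 < ρ → ρ < ρ₀ →
      0 < f ρ ∧ f ρ < 1 ∧ f ρ ^ α (x - 3 * f ρ) = ρ ∧ f ρ ≤ c₁ * ρ ^ (1 / α₁)) :
    Filter.Tendsto (fun ρ => ρ ^ (1 / α x) / f ρ) (nhdsWithin 0 (Set.Ioi 0)) (nhds 1) :=
  inverse_norming_asymptotics_general α₀ α₁ h0 h01 α hα hrange x c₁ ρ₀ hρ₀ f hf
end

section
/- Let (Ω, F, P) be a probability space and t₁ > 0. For each t ∈ (0, t₁] let M_t : Ω → [0, ∞) be a random variable such that for every ω the map t ↦ M_t(ω) is nondecreasing. Let F : (0, ∞) → [0, ∞) satisfy F(λR) ≤ λ⁻² F(R) for all R > 0 and all 0 < λ ≤ 1. Let c > 0 and assume P(M_t ≥ R) ≤ c · t · F(R) for all t ∈ (0, t₁] and all R > 0. Let v : (0, t₁] → (0, ∞) be monotone increasing with t ↦ F(v(t)) measurable and ∫₀^{t₁} F(v(t)) dt < ∞. Then, almost surely, lim_{t → 0⁺} M_t / v(t) = 0. -/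
/-!
Since `F` need not be monotone, `F ∘ v` cannot be compared at different times, so the argument
runs along well-chosen times: in each dyadic interval `(t₁ / 2ⁿ⁺¹, t₁ / 2ⁿ]` pick a point `sₙ`
where `F ∘ v` is at most its mean. Then `sₙ F(v(sₙ₊₂))` is at most `8` times the integral of
`F ∘ v` over the `(n+2)`-nd interval, a summable sequence since the intervals are disjoint.
The maximal inequality and the scaling `F(εR) ≤ ε⁻² F(R)` bound
`P(M_{sₙ} ≥ ε v(sₙ₊₂))` by `c ε⁻² sₙ F(v(sₙ₊₂))`, so by Borel–Cantelli `M_{sₙ} / v(sₙ₊₂) → 0`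
almost surely, and monotonicity of `M` and `v` transfers this to all `t ∈ (sₙ₊₂, sₙ]`.
-/

open MeasureTheory Filter Topology Set Function

def dyadicIoc (T : ℝ) (n : ℕ) : Set ℝ := Ioc (T / 2 ^ (n + 1)) (T / 2 ^ n)

lemma dyadicIoc_subset_Ioc (T : ℝ) (n : ℕ) : dyadicIoc T n ⊆ Ioc 0 T := by
  rintro x ⟨hlo, hhi⟩
  rw [pow_succ, ← div_div] at hlo
  have hT : 0 < T := (div_pos_iff_of_pos_right (by positivity : (0 : ℝ) < 2 ^ n)).1 (by linarith)
  exact ⟨lt_trans (by positivity) hlo, hhi.trans (div_le_self hT.le (one_le_pow₀ one_le_two))⟩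

lemma pairwise_disjoint_dyadicIoc {T : ℝ} (hT : 0 ≤ T) : Pairwise (Disjoint on dyadicIoc T) :=
  Antitone.pairwise_disjoint_on_Ioc_succ (f := fun n : ℕ => T / 2 ^ n)
    fun _ _ hmn => div_le_div_of_nonneg_left hT (by positivity) (pow_le_pow_right₀ one_le_two hmn)

lemma measureReal_dyadicIoc {T : ℝ} (hT : 0 ≤ T) (n : ℕ) :
    volume.real (dyadicIoc T n) = T / 2 ^ (n + 1) := by
  rw [dyadicIoc, Real.volume_real_Ioc_of_le (div_le_div_of_nonneg_left hT (by positivity)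
    (pow_le_pow_right₀ one_le_two (n.le_add_right 1)))]
  ring

lemma exists_ge_mem_dyadicIoc {T t : ℝ} {N : ℕ} (ht : 0 < t) (htN : t ≤ T / 2 ^ N) :
    ∃ n ≥ N, t ∈ dyadicIoc T n := by
  have hT : 0 < T := by
    by_contra! hT
    linarith [div_nonpos_of_nonpos_of_nonneg hT (pow_nonneg zero_le_two N)]
  have hpow (k : ℕ) : T / 2 ^ k = T * 2⁻¹ ^ k := by rw [inv_pow, div_eq_mul_inv]
  rw [hpow, ← div_le_iff₀' hT] at htN
  obtain ⟨n, hlo, hhi⟩ := exists_nat_pow_near_of_lt_one (div_pos ht hT)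
    (htN.trans (pow_le_one₀ (by norm_num) (by norm_num))) (by norm_num) (by norm_num : (2⁻¹ : ℝ) < 1)
  refine ⟨n, ?_, ?_⟩
  · have := (pow_lt_pow_iff_right_of_lt_one₀ (by norm_num) (by norm_num : (2⁻¹ : ℝ) < 1)).1
      (hlo.trans_le htN)
    omega
  · rw [dyadicIoc, hpow, hpow]
    exact ⟨(lt_div_iff₀' hT).1 hlo, (div_le_iff₀' hT).1 hhi⟩

lemma exists_mem_measureReal_mul_le_setIntegral {α : Type*} [MeasurableSpace α] {μ : Measure α}
    {s : Set α} {f : α → ℝ} (hμ : μ s ≠ 0) (hμ₁ : μ s ≠ ⊤) (hf : IntegrableOn f s μ) :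
    ∃ x ∈ s, μ.real s * f x ≤ ∫ x in s, f x ∂μ := by
  obtain ⟨x, hx, hle⟩ := exists_le_setAverage hμ hμ₁ hf
  refine ⟨x, hx, ?_⟩
  rw [← measure_smul_setAverage f hμ₁, smul_eq_mul]
  exact mul_le_mul_of_nonneg_left hle measureReal_nonneg

lemma summable_setIntegral_dyadicIoc {T : ℝ} {μ : Measure ℝ} {f : ℝ → ℝ} (hT : 0 ≤ T)
    (hf : IntegrableOn f (Ioc 0 T) μ) : Summable fun n => ∫ x in dyadicIoc T n, f x ∂μ :=
  (hasSum_integral_iUnion (fun _ => measurableSet_Ioc) (pairwise_disjoint_dyadicIoc hT)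
    (hf.mono_set (iUnion_subset (dyadicIoc_subset_Ioc T)))).summable

lemma exists_seq_mem_dyadicIoc_mul_le_setIntegral {T : ℝ} {g : ℝ → ℝ} (hT : 0 < T)
    (hg : IntegrableOn g (Ioc 0 T)) (hg_nonneg : ∀ t ∈ Ioc 0 T, 0 ≤ g t) :
    ∃ s : ℕ → ℝ, ∀ n, s n ∈ dyadicIoc T n ∧
      s n * g (s (n + 2)) ≤ 8 * ∫ x in dyadicIoc T (n + 2), g x := by
  have hsel (n : ℕ) : ∃ x ∈ dyadicIoc T n, T / 2 ^ (n + 1) * g x ≤ ∫ x in dyadicIoc T n, g x := by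
    have hlt : T / 2 ^ (n + 1) < T / 2 ^ n :=
      div_lt_div_of_pos_left hT (by positivity) (pow_lt_pow_right₀ one_lt_two n.lt_add_one)
    rw [← measureReal_dyadicIoc hT.le]
    refine exists_mem_measureReal_mul_le_setIntegral ?_ measure_Ioc_lt_top.ne
      (hg.mono_set (dyadicIoc_subset_Ioc T n))
    rw [dyadicIoc, Real.volume_Ioc]
    exact (ENNReal.ofReal_pos.2 (sub_pos.2 hlt)).ne'
  choose s hs_mem hs_le using hsel
  refine ⟨s, fun n => ⟨hs_mem n, ?_⟩⟩
  calc s n * g (s (n + 2)) ≤ T / 2 ^ n * g (s (n + 2)) :=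
        mul_le_mul_of_nonneg_right (hs_mem n).2 (hg_nonneg _ (dyadicIoc_subset_Ioc T _ (hs_mem _)))
    _ = 8 * (T / 2 ^ (n + 2 + 1) * g (s (n + 2))) := by ring
    _ ≤ 8 * ∫ x in dyadicIoc T (n + 2), g x := by gcongr; exact hs_le (n + 2)

lemma measure_le_abs_div_le {Ω : Type*} [MeasurableSpace Ω] {P : Measure Ω} {X : Ω → ℝ}
    {F : ℝ → ℝ} {C R ε : ℝ} (hX : ∀ ω, 0 ≤ X ω) (hC : 0 ≤ C) (hR : 0 < R) (hε₀ : 0 < ε)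
    (hε₁ : ε ≤ 1) (hF_scale : ∀ R > (0 : ℝ), ∀ l : ℝ, 0 < l → l ≤ 1 → F (l * R) ≤ (l ^ 2)⁻¹ * F R)
    (hmax : ∀ R > (0 : ℝ), P {ω | R ≤ X ω} ≤ ENNReal.ofReal (C * F R)) :
    P {ω | ε ≤ |X ω / R|} ≤ ENNReal.ofReal (C * (ε ^ 2)⁻¹ * F R) := by
  have hsub : {ω | ε ≤ |X ω / R|} ⊆ {ω | ε * R ≤ X ω} := fun ω hω => by
    rwa [mem_ofPred_eq, abs_of_nonneg (div_nonneg (hX ω) hR.le), le_div_iff₀ hR] at hω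
  calc P {ω | ε ≤ |X ω / R|} ≤ P {ω | ε * R ≤ X ω} := measure_mono hsub
    _ ≤ ENNReal.ofReal (C * F (ε * R)) := hmax _ (by positivity)
    _ ≤ ENNReal.ofReal (C * (ε ^ 2)⁻¹ * F R) := by
      rw [mul_assoc]
      gcongr
      exact hF_scale R hR ε hε₀ hε₁

lemma ae_tendsto_zero_of_tsum_measure_ne_top {Ω : Type*} [MeasurableSpace Ω] {μ : Measure Ω}
    {X : ℕ → Ω → ℝ} (h : ∀ᶠ ε in 𝓝[>] 0, ∑' n, μ {ω | ε ≤ |X n ω|} ≠ ⊤) :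
    ∀ᵐ ω ∂μ, Tendsto (fun n => X n ω) atTop (𝓝 0) := by
  obtain ⟨δ, hδ, hδh⟩ := (nhdsGT_basis (0 : ℝ)).eventually_iff.1 h
  have hk (k : ℕ) : ∀ᵐ ω ∂μ, ∀ᶠ n in atTop, |X n ω| < δ / (k + 2) := by
    have hmem : δ / (k + 2) ∈ Ioo 0 δ :=
      ⟨by positivity, div_lt_self hδ (by linarith [k.cast_nonneg (α := ℝ)])⟩
    filter_upwards [ae_eventually_notMem (hδh hmem)] with ω hω
    simpa using hω
  filter_upwards [ae_all_iff.2 hk] with ω hω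
  rw [Metric.tendsto_atTop]
  intro ε hε
  obtain ⟨k, hk⟩ := exists_nat_gt (δ / ε)
  obtain ⟨N, hN⟩ := eventually_atTop.1 (hω k)
  refine ⟨N, fun n hn => ?_⟩
  rw [Real.dist_eq, sub_zero]
  refine (hN n hn).trans ((div_lt_iff₀ (by positivity)).2 ?_)
  rw [div_lt_iff₀ hε] at hk
  nlinarith

lemma tendsto_div_nhdsGT_zero_of_dyadicIoc {T : ℝ} {m w : ℝ → ℝ} {s : ℕ → ℝ}
    (hm_nonneg : ∀ t ∈ Ioc 0 T, 0 ≤ m t) (hm : MonotoneOn m (Ioc 0 T))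
    (hw_pos : ∀ t ∈ Ioc 0 T, 0 < w t) (hw : MonotoneOn w (Ioc 0 T))
    (hs : ∀ n, s n ∈ dyadicIoc T n)
    (h : Tendsto (fun n => m (s n) / w (s (n + 2))) atTop (𝓝 0)) :
    Tendsto (fun t => m t / w t) (𝓝[>] 0) (𝓝 0) := by
  have hs' (n : ℕ) : s n ∈ Ioc 0 T := dyadicIoc_subset_Ioc T n (hs n)
  have hT : 0 < T := (hs' 0).1.trans_le (hs' 0).2
  rw [Metric.tendsto_nhds]
  intro ε hε
  obtain ⟨N, hN⟩ := eventually_atTop.1 ((tendsto_order.1 h).2 ε hε)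
  filter_upwards [Ioc_mem_nhdsGT (by positivity : (0 : ℝ) < T / 2 ^ (N + 1))] with t ht
  obtain ⟨n, hn, htn⟩ := exists_ge_mem_dyadicIoc ht.1 ht.2
  obtain ⟨k, rfl⟩ : ∃ k, n = k + 1 := ⟨n - 1, by omega⟩
  have htT : t ∈ Ioc 0 T := dyadicIoc_subset_Ioc T _ htn
  have hsk : t ≤ s k := htn.2.trans (hs k).1.le
  have hsk₂ : s (k + 2) ≤ t := (hs (k + 2)).2.trans htn.1.le
  rw [Real.dist_eq, sub_zero, abs_of_nonneg (div_nonneg (hm_nonneg t htT) (hw_pos t htT).le)]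
  calc m t / w t ≤ m (s k) / w (s (k + 2)) :=
        div_le_div₀ (hm_nonneg _ (hs' k)) (hm htT (hs' k) hsk) (hw_pos _ (hs' _))
          (hw (hs' _) htT hsk₂)
    _ < ε := hN k (by omega)

theorem upper_function_criterion_general {Ω : Type*} [MeasurableSpace Ω]
    (P : Measure Ω)
    (t₁ : ℝ) (ht₁ : 0 < t₁)
    (M : ℝ → Ω → ℝ)
    (hM_nonneg : ∀ t ∈ Set.Ioc 0 t₁, ∀ ω, 0 ≤ M t ω)
    (hM_mono : ∀ ω, MonotoneOn (fun t => M t ω) (Set.Ioc 0 t₁))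
    (F : ℝ → ℝ) (hF_nonneg : ∀ R > (0 : ℝ), 0 ≤ F R)
    (hF_scale : ∀ R > (0 : ℝ), ∀ l : ℝ, 0 < l → l ≤ 1 → F (l * R) ≤ (l ^ 2)⁻¹ * F R)
    (c : ℝ) (hc : 0 < c)
    (hmax : ∀ t ∈ Set.Ioc 0 t₁, ∀ R > (0 : ℝ),
      P {ω | R ≤ M t ω} ≤ ENNReal.ofReal (c * t * F R))
    (v : ℝ → ℝ) (hv_pos : ∀ t ∈ Set.Ioc 0 t₁, 0 < v t)
    (hv_mono : MonotoneOn v (Set.Ioc 0 t₁))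
    (hint : IntegrableOn (fun t => F (v t)) (Set.Ioc 0 t₁)) :
    ∀ᵐ ω ∂P, Filter.Tendsto (fun t => M t ω / v t) (nhdsWithin 0 (Set.Ioi 0)) (nhds 0) := by
  obtain ⟨s, hs⟩ := exists_seq_mem_dyadicIoc_mul_le_setIntegral ht₁ hint
    fun t ht => hF_nonneg _ (hv_pos t ht)
  have hs' (n : ℕ) : s n ∈ Ioc 0 t₁ := dyadicIoc_subset_Ioc t₁ n (hs n).1
  have hsummable : ∀ᶠ ε in 𝓝[>] 0, ∑' n, P {ω | ε ≤ |M (s n) ω / v (s (n + 2))|} ≠ ⊤ := by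
    filter_upwards [Ioc_mem_nhdsGT zero_lt_one] with ε hε
    have hI := ((summable_setIntegral_dyadicIoc ht₁.le hint).comp_injective
      (add_left_injective 2)).mul_left (c * (ε ^ 2)⁻¹ * 8)
    refine ne_top_of_le_ne_top hI.tsum_ofReal_ne_top (ENNReal.tsum_le_tsum fun n => ?_)
    refine (measure_le_abs_div_le (hM_nonneg _ (hs' n)) (mul_pos hc (hs' n).1).le
      (hv_pos _ (hs' _)) hε.1 hε.2 hF_scale (hmax _ (hs' n))).trans (ENNReal.ofReal_le_ofReal ?_)
    calc c * s n * (ε ^ 2)⁻¹ * F (v (s (n + 2)))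
        = c * (ε ^ 2)⁻¹ * (s n * F (v (s (n + 2)))) := by ring
      _ ≤ c * (ε ^ 2)⁻¹ * (8 * ∫ x in dyadicIoc t₁ (n + 2), F (v x)) :=
        mul_le_mul_of_nonneg_left (hs n).2 (by positivity)
      _ = c * (ε ^ 2)⁻¹ * 8 * ∫ x in dyadicIoc t₁ (n + 2), F (v x) := by ring
  filter_upwards [ae_tendsto_zero_of_tsum_measure_ne_top hsummable] with ω hω
  exact tendsto_div_nhdsGT_zero_of_dyadicIoc (fun t ht => hM_nonneg t ht ω) (hM_mono ω) hv_pos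
    hv_mono (fun n => (hs n).1) hω

/-- Abstract upper-function criterion (Proposition 3.1): if `M_t` is nondecreasing in `t`,
`P(M_t ≥ R) ≤ c t F(R)` with `F(λR) ≤ λ⁻² F(R)` for `0 < λ ≤ 1`, and the increasing
norming function `v` satisfies `∫₀^{t₁} F(v(t)) dt < ∞`, then almost surely
`M_t / v(t) → 0` as `t → 0⁺`. -/
theorem upper_function_criterion {Ω : Type*} [MeasurableSpace Ω]
    (P : Measure Ω) [IsProbabilityMeasure P]
    (t₁ : ℝ) (ht₁ : 0 < t₁)
    (M : ℝ → Ω → ℝ)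
    (hM_meas : ∀ t ∈ Set.Ioc 0 t₁, Measurable (M t))
    (hM_nonneg : ∀ t ∈ Set.Ioc 0 t₁, ∀ ω, 0 ≤ M t ω)
    (hM_mono : ∀ ω, MonotoneOn (fun t => M t ω) (Set.Ioc 0 t₁))
    (F : ℝ → ℝ) (hF_nonneg : ∀ R > (0 : ℝ), 0 ≤ F R)
    (hF_scale : ∀ R > (0 : ℝ), ∀ l : ℝ, 0 < l → l ≤ 1 → F (l * R) ≤ (l ^ 2)⁻¹ * F R)
    (c : ℝ) (hc : 0 < c)
    (hmax : ∀ t ∈ Set.Ioc 0 t₁, ∀ R > (0 : ℝ),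
      P {ω | R ≤ M t ω} ≤ ENNReal.ofReal (c * t * F R))
    (v : ℝ → ℝ) (hv_pos : ∀ t ∈ Set.Ioc 0 t₁, 0 < v t)
    (hv_mono : MonotoneOn v (Set.Ioc 0 t₁))
    (hint : IntegrableOn (fun t => F (v t)) (Set.Ioc 0 t₁)) :
    ∀ᵐ ω ∂P, Filter.Tendsto (fun t => M t ω / v t) (nhdsWithin 0 (Set.Ioi 0)) (nhds 0) :=
  upper_function_criterion_general P t₁ ht₁ M hM_nonneg hM_mono F hF_nonneg hF_scale c hc hmax v
    hv_pos hv_mono hint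
end

section
/- Let (Ω, F, P) be a probability space, x ∈ ℝ, t₁ > 0, and for each t ∈ (0, t₁) let X_t : Ω → ℝ be a random variable. Let g : [1, ∞) → [0, ∞) be monotone nondecreasing, δ > 0, and assume |E[e^{iη(X_t − x)}]| ≤ e^{−δ t g(η)} for all η ≥ 1 and all t ∈ (0, t₁). Let w : (0, t₁) → (0, 1] be nonincreasing, and set L = liminf_{t → 0⁺} t · g(1/w(t)) ∈ [0, ∞]. Then for all reals 1 < a < b: limsup_{t → 0⁺} | ∫_a^b E[e^{iξ(X_t − x)/w(t)}] dξ | ≤ (b − a) · e^{−δ L} (with the convention e^{−∞} = 0). -/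
open MeasureTheory Filter Set Complex
open scoped ENNReal Topology

/-!
Rescaling the frequency by `1 / w t ≥ 1` and using that `g` is nondecreasing, the integrand is
bounded by `exp (-δ t g (1 / w t))` uniformly in `ξ ∈ [a, b]`. It remains to pass to the limsup:
`x ↦ e^{-δ x}` is a continuous antitone map on `[0, ∞]`, so it turns the liminf of `t g (1 / w t)`
into the limsup of `exp (-δ t g (1 / w t))`.
-/

/-- `e^{-x}` on `[0, ∞]`, with `e^{-∞} = 0`. -/
noncomputable def ENNReal.expNeg (x : ℝ≥0∞) : ℝ :=
  (EReal.exp (-(x : EReal))).toReal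

namespace EReal

lemma exp_neg_coe_ennreal_le_one (x : ℝ≥0∞) : exp (-(x : EReal)) ≤ 1 :=
  exp_le_one_iff.2 (EReal.neg_le_zero.2 (coe_ennreal_nonneg x))

lemma exp_neg_coe_ennreal_ne_top (x : ℝ≥0∞) : exp (-(x : EReal)) ≠ ∞ :=
  ne_top_of_le_ne_top ENNReal.one_ne_top (exp_neg_coe_ennreal_le_one x)

end EReal

namespace ENNReal

lemma expNeg_ofReal {r : ℝ} (hr : 0 ≤ r) : expNeg (ENNReal.ofReal r) = Real.exp (-r) := by
  rw [expNeg, EReal.coe_ennreal_ofReal, max_eq_left hr, ← EReal.coe_neg, EReal.exp_coe,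
    toReal_ofReal (Real.exp_nonneg _)]

lemma expNeg_top : expNeg ∞ = 0 := by
  simp [expNeg]

lemma expNeg_le_one (x : ℝ≥0∞) : expNeg x ≤ 1 :=
  toReal_le_of_le_ofReal zero_le_one (by simpa using EReal.exp_neg_coe_ennreal_le_one x)

lemma antitone_expNeg : Antitone expNeg :=
  fun _ _ h => toReal_mono (EReal.exp_neg_coe_ennreal_ne_top _)
    (EReal.exp_monotone (EReal.neg_le_neg_iff.2 (EReal.coe_ennreal_le_coe_ennreal_iff.2 h)))

lemma continuous_expNeg : Continuous expNeg :=
  continuous_iff_continuousAt.2 fun x => (tendsto_toReal (EReal.exp_neg_coe_ennreal_ne_top x)).comp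
    (EReal.expHomeomorph.continuous.comp
      (continuous_neg.comp continuous_coe_ennreal_ereal)).continuousAt

lemma expNeg_ofReal_mul {δ : ℝ} (hδ : 0 < δ) (L : ℝ≥0∞) :
    expNeg (ENNReal.ofReal δ * L) = if L = ∞ then 0 else Real.exp (-δ * L.toReal) := by
  split_ifs with hL
  · rw [hL, mul_top (by simpa using hδ), expNeg_top]
  · rw [← ofReal_toReal hL, ← ofReal_mul hδ.le, expNeg_ofReal (by positivity), toReal_ofReal
      toReal_nonneg, neg_mul]

lemma limsup_mul_expNeg_mul {α : Type*} {l : Filter α} [l.NeBot] (u : α → ℝ≥0∞) {c : ℝ}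
    (hc : 0 ≤ c) (δ : ℝ) :
    limsup (fun t => c * expNeg (ENNReal.ofReal δ * u t)) l
      = c * expNeg (ENNReal.ofReal δ * liminf u l) := by
  have hmul : Continuous fun x : ℝ≥0∞ => ENNReal.ofReal δ * x :=
    ENNReal.continuous_const_mul ofReal_ne_top
  have hanti : Antitone fun x : ℝ≥0∞ => c * expNeg (ENNReal.ofReal δ * x) :=
    (antitone_expNeg.comp_monotone fun _ _ h => mul_le_mul_right h _).const_mul hc
  exact (hanti.map_liminf_of_continuousAt u
    (continuous_const.mul (continuous_expNeg.comp hmul)).continuousAt).symm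

end ENNReal

section CharacteristicFunction

variable {Ω : Type*} [MeasurableSpace Ω] (P : Measure Ω) (Y : Ω → ℝ) {g : ℝ → ℝ} {δ t w : ℝ}

lemma norm_integral_exp_div_le (hg : MonotoneOn g (Ici 1)) (hδ : 0 ≤ δ) (ht : 0 ≤ t)
    (hY : ∀ η : ℝ, 1 ≤ η → ‖∫ ω, cexp (I * η * (Y ω : ℂ)) ∂P‖ ≤ Real.exp (-δ * t * g η))
    (hw₀ : 0 < w) (hw₁ : w ≤ 1) {ξ : ℝ} (hξ : 1 ≤ ξ) :
    ‖∫ ω, cexp (I * ξ * (Y ω : ℂ) / (w : ℂ)) ∂P‖ ≤ Real.exp (-δ * t * g (1 / w)) := by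
  have h_rescale : ∀ ω, I * ξ * (Y ω : ℂ) / (w : ℂ) = I * ((ξ / w : ℝ) : ℂ) * (Y ω : ℂ) := by
    intro ω
    push_cast
    ring
  have h_one_le : 1 ≤ 1 / w := one_le_one_div hw₀ hw₁
  have h_le : 1 / w ≤ ξ / w := div_le_div_of_nonneg_right hξ hw₀.le
  simp_rw [h_rescale]
  refine (hY _ (h_one_le.trans h_le)).trans (Real.exp_le_exp.2 ?_)
  exact mul_le_mul_of_nonpos_left (hg h_one_le (h_one_le.trans h_le) h_le)
    (mul_nonpos_of_nonpos_of_nonneg (neg_nonpos.2 hδ) ht)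

lemma norm_intervalIntegral_integral_exp_div_le (hg : MonotoneOn g (Ici 1)) (hδ : 0 ≤ δ)
    (ht : 0 ≤ t)
    (hY : ∀ η : ℝ, 1 ≤ η → ‖∫ ω, cexp (I * η * (Y ω : ℂ)) ∂P‖ ≤ Real.exp (-δ * t * g η))
    (hw₀ : 0 < w) (hw₁ : w ≤ 1) {a b : ℝ} (ha : 1 ≤ a) (hab : a ≤ b) :
    ‖∫ ξ in a..b, ∫ ω, cexp (I * ξ * (Y ω : ℂ) / (w : ℂ)) ∂P‖
      ≤ (b - a) * Real.exp (-δ * t * g (1 / w)) := by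
  have h := intervalIntegral.norm_integral_le_of_norm_le_const fun ξ hξ =>
    norm_integral_exp_div_le P Y hg hδ ht hY hw₀ hw₁ (ha.trans (uIoc_of_le hab ▸ hξ).1.le)
  rwa [abs_of_nonneg (sub_nonneg.2 hab), mul_comm] at h

end CharacteristicFunction

open ENNReal in
theorem limsup_char_integral_bound_general {Ω : Type*} [MeasurableSpace Ω]
    (P : Measure Ω)
    (x t₁ : ℝ) (ht₁ : 0 < t₁)
    (X : ℝ → Ω → ℝ)
    (g : ℝ → ℝ) (hg_nonneg : ∀ η : ℝ, 1 ≤ η → 0 ≤ g η)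
    (hg_mono : MonotoneOn g (Set.Ici 1))
    (δ : ℝ) (hδ : 0 < δ)
    (hchar : ∀ η : ℝ, 1 ≤ η → ∀ t ∈ Set.Ioo 0 t₁,
      ‖∫ ω, Complex.exp (Complex.I * (η : ℂ) * ((X t ω - x : ℝ) : ℂ)) ∂P‖
        ≤ Real.exp (-δ * t * g η))
    (w : ℝ → ℝ) (hw_pos : ∀ t ∈ Set.Ioo 0 t₁, 0 < w t)
    (hw_le : ∀ t ∈ Set.Ioo 0 t₁, w t ≤ 1)
    (L : ENNReal)
    (hL : L = Filter.liminf (fun t => ENNReal.ofReal (t * g (1 / w t)))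
      (nhdsWithin 0 (Set.Ioi 0)))
    (a b : ℝ) (ha : 1 < a) (hab : a < b) :
    Filter.limsup
      (fun t => ‖∫ ξ in a..b,
        ∫ ω, Complex.exp (Complex.I * (ξ : ℂ) * ((X t ω - x : ℝ) : ℂ) / ((w t : ℝ) : ℂ)) ∂P‖)
      (nhdsWithin 0 (Set.Ioi 0))
      ≤ (b - a) * (if L = ⊤ then 0 else Real.exp (-δ * L.toReal)) := by
  set u : ℝ → ℝ≥0∞ := fun t => ENNReal.ofReal (t * g (1 / w t))
  have h_bound : ∀ᶠ t in 𝓝[>] 0, ‖∫ ξ in a..b,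
      ∫ ω, cexp (I * ξ * ((X t ω - x : ℝ) : ℂ) / (w t : ℂ)) ∂P‖
        ≤ (b - a) * expNeg (ENNReal.ofReal δ * u t) := by
    filter_upwards [Ioo_mem_nhdsGT ht₁] with t ht
    have hu : 0 ≤ t * g (1 / w t) :=
      mul_nonneg ht.1.le (hg_nonneg _ (one_le_one_div (hw_pos t ht) (hw_le t ht)))
    rw [← ofReal_mul hδ.le, expNeg_ofReal (mul_nonneg hδ.le hu), ← mul_assoc, ← neg_mul, ← neg_mul]
    exact norm_intervalIntegral_integral_exp_div_le P (fun ω => X t ω - x) hg_mono hδ.le ht.1.le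
      (fun η hη => hchar η hη t ht) (hw_pos t ht) (hw_le t ht) ha.le hab.le
  have h_le_sub : ∀ t, (b - a) * expNeg (ENNReal.ofReal δ * u t) ≤ b - a := fun t =>
    mul_le_of_le_one_right (sub_nonneg.2 hab.le) (expNeg_le_one _)
  calc _ ≤ limsup (fun t => (b - a) * expNeg (ENNReal.ofReal δ * u t)) (𝓝[>] 0) :=
        limsup_le_limsup h_bound (isCoboundedUnder_le_of_le _ fun _ => norm_nonneg _)
          (isBoundedUnder_of_eventually_le (Eventually.of_forall h_le_sub))
    _ = _ := by
      rw [limsup_mul_expNeg_mul u (sub_nonneg.2 hab.le), ← hL, expNeg_ofReal_mul hδ]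

/-- Key intermediate estimate (4.4) for the liminf LIL via the symbol: if the
characteristic functions satisfy `|E e^{iη(X_t−x)}| ≤ e^{−δ t g(η)}` for `η ≥ 1`
and `w` is a nonincreasing norming function with values in `(0,1]`, then, with
`L = liminf_{t→0⁺} t g(1/w(t)) ∈ [0,∞]`, for all `1 < a < b`:
`limsup_{t→0⁺} |∫_a^b E[e^{iξ(X_t−x)/w(t)}] dξ| ≤ (b−a) e^{−δL}` (with `e^{−∞} = 0`). -/
theorem limsup_char_integral_bound {Ω : Type*} [MeasurableSpace Ω]
    (P : Measure Ω) [IsProbabilityMeasure P]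
    (x t₁ : ℝ) (ht₁ : 0 < t₁)
    (X : ℝ → Ω → ℝ) (hX : ∀ t ∈ Set.Ioo 0 t₁, Measurable (X t))
    (g : ℝ → ℝ) (hg_nonneg : ∀ η : ℝ, 1 ≤ η → 0 ≤ g η)
    (hg_mono : MonotoneOn g (Set.Ici 1))
    (δ : ℝ) (hδ : 0 < δ)
    (hchar : ∀ η : ℝ, 1 ≤ η → ∀ t ∈ Set.Ioo 0 t₁,
      ‖∫ ω, Complex.exp (Complex.I * (η : ℂ) * ((X t ω - x : ℝ) : ℂ)) ∂P‖
        ≤ Real.exp (-δ * t * g η))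
    (w : ℝ → ℝ) (hw_pos : ∀ t ∈ Set.Ioo 0 t₁, 0 < w t)
    (hw_le : ∀ t ∈ Set.Ioo 0 t₁, w t ≤ 1)
    (hw_anti : AntitoneOn w (Set.Ioo 0 t₁))
    (L : ENNReal)
    (hL : L = Filter.liminf (fun t => ENNReal.ofReal (t * g (1 / w t)))
      (nhdsWithin 0 (Set.Ioi 0)))
    (a b : ℝ) (ha : 1 < a) (hab : a < b) :
    Filter.limsup
      (fun t => ‖∫ ξ in a..b,
        ∫ ω, Complex.exp (Complex.I * (ξ : ℂ) * ((X t ω - x : ℝ) : ℂ) / ((w t : ℝ) : ℂ)) ∂P‖)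
      (nhdsWithin 0 (Set.Ioi 0))
      ≤ (b - a) * (if L = ⊤ then 0 else Real.exp (-δ * L.toReal)) :=
  limsup_char_integral_bound_general P x t₁ ht₁ X g hg_nonneg hg_mono δ hδ hchar w hw_pos hw_le L hL
    a b ha hab
end

section
/- Let 0 < α₀ ≤ α₁ < 2 and let α : ℝ → [α₀, α₁] be continuously differentiable with bounded derivative. Fix x ∈ ℝ and ε > 0. For t ∈ (0, e^{−e}) set ℓ(t) = log(1/t) · (log log(1/t))^{1+ε} and v(t) = (t·ℓ(t))^{1/α(x)}. Then there exists δ ∈ (0, e^{−e}) such that ∫₀^δ sup_{|y−x| ≤ v(t)} ( 1/(t·ℓ(t)) )^{α(y)/α(x)} dt < ∞. -/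
/-!
Write `s = t ℓ(t)` and `v = s ^ (1 / α x)`. On `|y - x| ≤ v` the Lipschitz bound
`α y ≤ α x + K v` gives `(1 / s) ^ (α y / α x) ≤ (1 / s) * (1 / v) ^ (K v) ≤ e ^ K / s`,
because `v log (1 / v) ≤ 1`. The dominating function `1 / (t ℓ(t))` is the derivative of
`(log log (1 / t)) ^ (-ε) / ε`, which is increasing and tends to `0` as `t → 0⁺`, so it is
integrable near `0`. Measurability of the supremum comes from writing it as
`(1 / s) ^ (m v / α x)`, where `m r` is the supremum of `α` over the closed ball of radius `r`,
a monotone function of `r`.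
-/

open Real Set Filter Topology MeasureTheory Metric

noncomputable def logLogWeight (ε t : ℝ) : ℝ :=
  log (1 / t) * log (log (1 / t)) ^ (1 + ε)

section LogLogWeight

variable {ε t : ℝ}

lemma one_lt_log_one_div (ht0 : 0 < t) (ht : t < exp (-1)) : 1 < log (1 / t) := by
  rw [one_div, log_inv]
  linarith [(log_lt_iff_lt_exp ht0).mpr ht]

lemma logLogWeight_pos (ht : 1 < log (1 / t)) : 0 < logLogWeight ε t :=
  mul_pos (by linarith) (rpow_pos_of_pos (log_pos ht) _)

lemma logLogWeight_le (hε : 0 ≤ 1 + ε) (ht : 1 ≤ log (1 / t)) :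
    logLogWeight ε t ≤ log (1 / t) ^ (2 + ε) := by
  set L := log (1 / t)
  have hL : 0 < L := by linarith
  have hlogL : log L ≤ L := (log_le_sub_one_of_pos hL).trans (by linarith)
  calc L * log L ^ (1 + ε) ≤ L * L ^ (1 + ε) := by gcongr; exact log_nonneg ht
    _ = L ^ (2 + ε) := by
      rw [← rpow_one_add' hL.le (by linarith)]
      ring_nf

lemma tendsto_log_one_div_nhdsGT_zero : Tendsto (fun t : ℝ => log (1 / t)) (𝓝[>] 0) atTop := by
  refine (tendsto_neg_atBot_atTop.comp tendsto_log_nhdsGT_zero).congr fun t => ?_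
  simp [log_inv]

lemma tendsto_mul_logLogWeight_nhdsGT_zero (hε : 0 ≤ 1 + ε) :
    Tendsto (fun t => t * logLogWeight ε t) (𝓝[>] 0) (𝓝 0) := by
  have hdom : Tendsto (fun t => log (1 / t) ^ (2 + ε) * exp (-1 * log (1 / t))) (𝓝[>] 0) (𝓝 0) :=
    (tendsto_rpow_mul_exp_neg_mul_atTop_nhds_zero (2 + ε) 1 one_pos).comp
      tendsto_log_one_div_nhdsGT_zero
  have hsmall : ∀ᶠ t in 𝓝[>] (0 : ℝ), 0 < t ∧ 1 ≤ log (1 / t) :=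
    eventually_mem_nhdsWithin.and (tendsto_log_one_div_nhdsGT_zero.eventually_ge_atTop 1)
  refine tendsto_of_tendsto_of_tendsto_of_le_of_le' tendsto_const_nhds hdom ?_ ?_
  · filter_upwards [hsmall] with t ⟨ht0, ht⟩
    exact mul_nonneg ht0.le (mul_nonneg (by linarith) (rpow_nonneg (log_nonneg ht) _))
  · filter_upwards [hsmall] with t ⟨ht0, ht⟩
    have hexp : exp (-1 * log (1 / t)) = t := by
      rw [one_div, log_inv, neg_one_mul, neg_neg, exp_log ht0]
    rw [hexp, mul_comm]
    exact mul_le_mul_of_nonneg_right (logLogWeight_le hε ht) ht0.le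

lemma exists_forall_mul_logLogWeight_mem_Ioc (hε : 0 ≤ 1 + ε) {η : ℝ} (hη0 : 0 < η)
    (hη : η ≤ exp (-1)) :
    ∃ δ, 0 < δ ∧ δ < η ∧ ∀ t ∈ Ioo 0 δ, t * logLogWeight ε t ∈ Ioc 0 1 := by
  obtain ⟨δ₀, hδ₀, hle⟩ := mem_nhdsGT_iff_exists_Ioo_subset.1
    ((tendsto_mul_logLogWeight_nhdsGT_zero hε).eventually (eventually_le_nhds one_pos))
  refine ⟨min δ₀ (η / 2), lt_min hδ₀ (by positivity), (min_le_right _ _).trans_lt (by linarith),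
    fun t ⟨ht0, htδ⟩ => ⟨mul_pos ht0 (logLogWeight_pos (one_lt_log_one_div ht0 ?_)),
      hle ⟨ht0, htδ.trans_le (min_le_left _ _)⟩⟩⟩
  exact htδ.trans_le ((min_le_right _ _).trans (by linarith))

lemma hasDerivAt_log_log_one_div_rpow (hε : ε ≠ 0) (ht0 : 0 < t) (ht : 1 < log (1 / t)) :
    HasDerivAt (fun u => log (log (1 / u)) ^ (-ε) / ε) (t * logLogWeight ε t)⁻¹ t := by
  have hL : HasDerivAt (fun u => log (1 / u)) (-t⁻¹) t := by
    simp only [one_div, log_inv]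
    exact (hasDerivAt_log ht0.ne').neg
  have hM := (hL.log (by linarith)).rpow_const (p := -ε) (Or.inl (log_pos ht).ne')
  refine (hM.div_const ε).congr_deriv ?_
  have hM0 : 0 < log (log (1 / t)) := log_pos ht
  unfold logLogWeight
  rw [show -ε - 1 = -(1 + ε) by ring, rpow_neg hM0.le]
  field_simp

lemma integrableOn_inv_mul_logLogWeight (hε : 0 < ε) {δ : ℝ} (hδ : δ < exp (-1)) :
    IntegrableOn (fun t => (t * logLogWeight ε t)⁻¹) (Ioc 0 δ) := by
  have hsmall : ∀ t ∈ Ioc 0 δ, 1 < log (1 / t) := fun t ht =>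
    one_lt_log_one_div ht.1 (ht.2.trans_lt hδ)
  refine intervalIntegral.integrableOn_deriv_of_nonneg
    (g := fun u => log (log (1 / u)) ^ (-ε) / ε) ?_
    (fun t ht => hasDerivAt_log_log_one_div_rpow hε.ne' ht.1 (hsmall t (Ioo_subset_Ioc_self ht)))
    (fun t ht => (inv_pos.2 (mul_pos ht.1
      (logLogWeight_pos (hsmall t (Ioo_subset_Ioc_self ht))))).le)
  intro t ht
  rcases ht.1.eq_or_lt with rfl | ht0
  · -- the formula gives `0` at `0` (`log 0 = 0`, `0 ^ (-ε) = 0`), which is its limit from the right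
    have hlim : Tendsto (fun u => log (log (1 / u)) ^ (-ε) / ε) (𝓝[>] 0) (𝓝 0) := by
      simpa using ((tendsto_rpow_neg_atTop hε).comp
        (tendsto_log_atTop.comp tendsto_log_one_div_nhdsGT_zero)).div_const ε
    refine (continuousWithinAt_Ioi_iff_Ici.1 ?_).mono Icc_subset_Ici_self
    simpa [ContinuousWithinAt, zero_rpow (neg_ne_zero.2 hε.ne')] using hlim
  · exact (hasDerivAt_log_log_one_div_rpow hε.ne' ht0
      (hsmall t ⟨ht0, ht.2⟩)).continuousAt.continuousWithinAt

end LogLogWeight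

lemma sSup_image_rpow_div {X : Type*} {b a : ℝ} (hb : 1 ≤ b) (ha : 0 ≤ a) {S : Set X} {f : X → ℝ}
    (hS : S.Nonempty) (hbdd : BddAbove (f '' S)) :
    sSup ((fun y => b ^ (f y / a)) '' S) = b ^ (sSup (f '' S) / a) := by
  have hmono : Monotone fun u : ℝ => b ^ (u / a) := fun u u' h =>
    rpow_le_rpow_of_exponent_le hb (div_le_div_of_nonneg_right h ha)
  have hcont : Continuous fun u : ℝ => b ^ (u / a) :=
    continuous_const.rpow (continuous_id.div_const a) fun _ => Or.inl (by positivity)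
  rw [hmono.map_csSup_of_continuousAt hcont.continuousAt (hS.image f) hbdd, image_image]

lemma one_div_rpow_le_exp_div {s a K : ℝ} (hs : 0 < s) (ha : 0 < a) (hK : 0 ≤ K) :
    (1 / s) ^ ((a + K * s ^ (1 / a)) / a) ≤ exp K / s := by
  set v := s ^ (1 / a)
  have hv : 0 < v := rpow_pos_of_pos hs _
  have hlog : log (1 / s) = a * log (1 / v) := by
    rw [one_div, one_div, log_inv, log_inv, log_rpow hs]
    field_simp
  have hvlog : v * log (1 / v) ≤ 1 := by
    have := mul_le_mul_of_nonneg_left (log_le_sub_one_of_pos (one_div_pos.2 hv)) hv.le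
    rw [mul_sub, mul_one_div_cancel hv.ne'] at this
    linarith
  calc (1 / s) ^ ((a + K * v) / a) = exp (log (1 / s) + K * (v * log (1 / v))) := by
        rw [rpow_def_of_pos (one_div_pos.2 hs), hlog]
        congr 1
        field_simp
    _ ≤ exp (log (1 / s) + K) := by gcongr; nlinarith
    _ = exp K / s := by rw [exp_add, exp_log (one_div_pos.2 hs)]; ring

lemma lipschitzWith_toNNReal_of_abs_deriv_le {f : ℝ → ℝ} {K : ℝ} (hf : Differentiable ℝ f)
    (hK : ∀ y, |deriv f y| ≤ K) : LipschitzWith K.toNNReal f :=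
  lipschitzWith_of_nnnorm_deriv_le hf fun y => by
    rw [← NNReal.coe_le_coe, coe_nnnorm, Real.coe_toNNReal K ((abs_nonneg _).trans (hK y)),
      Real.norm_eq_abs]
    exact hK y

section SupOverBalls

variable {X : Type*} [PseudoMetricSpace X]

lemma monotone_sSup_image_closedBall [ProperSpace X] {f : X → ℝ} (hf : Continuous f)
    (hf0 : ∀ y, 0 ≤ f y) (x : X) : Monotone fun r => sSup (f '' closedBall x r) := by
  intro r r' hr
  rcases (closedBall x r).eq_empty_or_nonempty with hempty | hne
  · simpa [hempty] using Real.sSup_nonneg (by rintro - ⟨y, -, rfl⟩; exact hf0 y)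
  · exact csSup_le_csSup ((isCompact_closedBall x r').bddAbove_image hf.continuousOn)
      (hne.image f) (image_mono (closedBall_subset_closedBall hr))

lemma LipschitzWith.sSup_image_closedBall_le {K : NNReal} {f : X → ℝ} (hf : LipschitzWith K f)
    (x : X) {r : ℝ} (hr : 0 ≤ r) : sSup (f '' closedBall x r) ≤ f x + K * r := by
  refine csSup_le ((nonempty_closedBall.2 hr).image f) ?_
  rintro - ⟨y, hy, rfl⟩
  have := (le_abs_self _).trans (hf.dist_le_mul y x)
  nlinarith [mem_closedBall.1 hy, K.coe_nonneg]

lemma LipschitzWith.one_div_rpow_sSup_image_closedBall_le {f : X → ℝ} {K : NNReal}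
    (hf : LipschitzWith K f) {x : X} {s : ℝ} (hfx : 0 < f x) (hs0 : 0 < s) (hs1 : s ≤ 1) :
    (1 / s) ^ (sSup (f '' closedBall x (s ^ (1 / f x))) / f x) ≤ exp K / s :=
  calc (1 / s) ^ (sSup (f '' closedBall x (s ^ (1 / f x))) / f x)
      ≤ (1 / s) ^ ((f x + K * s ^ (1 / f x)) / f x) :=
        rpow_le_rpow_of_exponent_le (one_le_one_div hs0 hs1) <| div_le_div_of_nonneg_right
          (hf.sSup_image_closedBall_le x (rpow_nonneg hs0.le _)) hfx.le
    _ ≤ exp K / s := one_div_rpow_le_exp_div hs0 hfx K.coe_nonneg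

end SupOverBalls

theorem stable_like_integral_test_general (α₀ α₁ : ℝ) (h0 : 0 < α₀)
    (α : ℝ → ℝ) (hα : ContDiff ℝ 1 α) (K : ℝ) (hK : ∀ y, |deriv α y| ≤ K)
    (hrange : ∀ y, α y ∈ Set.Icc α₀ α₁)
    (x ε : ℝ) (hε : 0 < ε)
    (ℓ v : ℝ → ℝ)
    (hℓ : ∀ t : ℝ, 0 < t → t < Real.exp (-Real.exp 1) →
      ℓ t = Real.log (1 / t) * Real.log (Real.log (1 / t)) ^ ((1 : ℝ) + ε))
    (hv : ∀ t : ℝ, 0 < t → t < Real.exp (-Real.exp 1) →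
      v t = (t * ℓ t) ^ (1 / α x)) :
    ∃ δ : ℝ, 0 < δ ∧ δ < Real.exp (-Real.exp 1) ∧
      IntegrableOn
        (fun t => sSup ((fun y => (1 / (t * ℓ t)) ^ (α y / α x)) '' {y | |y - x| ≤ v t}))
        (Set.Ioo 0 δ) := by
  have hα0 : ∀ y, 0 < α y := fun y => h0.trans_le (hrange y).1
  have hE : exp (-exp 1) < exp (-1) := exp_lt_exp.2 (by linarith [add_one_le_exp 1])
  obtain ⟨δ, hδ0, hδ, hs⟩ :=
    exists_forall_mul_logLogWeight_mem_Ioc (ε := ε) (by linarith) (exp_pos _) hE.le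
  refine ⟨δ, hδ0, hδ, ?_⟩
  set s := fun t => t * logLogWeight ε t
  set m := fun r => sSup (α '' closedBall x r)
  have hrepr : ∀ t ∈ Ioo 0 δ, (1 / s t) ^ (m (s t ^ (1 / α x)) / α x) =
      sSup ((fun y => (1 / (t * ℓ t)) ^ (α y / α x)) '' {y | |y - x| ≤ v t}) := by
    intro t ht
    have hℓt : ℓ t = logLogWeight ε t := hℓ t ht.1 (ht.2.trans hδ)
    have hball : {y | |y - x| ≤ v t} = closedBall x (s t ^ (1 / α x)) := by
      ext y
      simp [Real.dist_eq, hv t ht.1 (ht.2.trans hδ), hℓt, s]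
    rw [hball, hℓt, sSup_image_rpow_div (one_le_one_div (hs t ht).1 (hs t ht).2) (hα0 x).le
      (nonempty_closedBall.2 (rpow_nonneg (hs t ht).1.le _))
      ((isCompact_closedBall _ _).bddAbove_image hα.continuous.continuousOn)]
  refine IntegrableOn.congr_fun ?_ hrepr measurableSet_Ioo
  refine Integrable.mono' (((integrableOn_inv_mul_logLogWeight hε (hδ.trans hE)).mono_set
    Ioo_subset_Ioc_self).const_mul (exp K.toNNReal)) ?_ ?_
  · have hm : Measurable m :=
      (monotone_sSup_image_closedBall hα.continuous (fun y => (hα0 y).le) x).measurable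
    have hsm : Measurable s := by unfold s logLogWeight; fun_prop
    exact (by fun_prop : Measurable fun t => (1 / s t) ^ (m (s t ^ (1 / α x)) / α x))
      |>.aestronglyMeasurable
  · filter_upwards [ae_restrict_mem measurableSet_Ioo] with t ht
    rw [Real.norm_of_nonneg (rpow_nonneg (one_div_pos.2 (hs t ht).1).le _), ← div_eq_mul_inv]
    exact (lipschitzWith_toNNReal_of_abs_deriv_le (hα.differentiable one_ne_zero) hK)
      |>.one_div_rpow_sSup_image_closedBall_le (hα0 x) (hs t ht).1 (hs t ht).2

/-- Example 3.3 (with one iterated logarithm): for a stable-like index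
`α : ℝ → [α₀,α₁] ⊂ (0,2)` (continuously differentiable, bounded derivative),
with `ℓ(t) = log(1/t)·(log log(1/t))^{1+ε}` and `v(t) = (t ℓ(t))^{1/α(x)}`,
the integral test
`∫₀^δ sup_{|y−x|≤v(t)} (1/(t ℓ(t)))^{α(y)/α(x)} dt < ∞`
holds for some `δ ∈ (0, e^{−e})`. -/
theorem stable_like_integral_test (α₀ α₁ : ℝ) (h0 : 0 < α₀) (h01 : α₀ ≤ α₁) (h1 : α₁ < 2)
    (α : ℝ → ℝ) (hα : ContDiff ℝ 1 α) (K : ℝ) (hK : ∀ y, |deriv α y| ≤ K)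
    (hrange : ∀ y, α y ∈ Set.Icc α₀ α₁)
    (x ε : ℝ) (hε : 0 < ε)
    (ℓ v : ℝ → ℝ)
    (hℓ : ∀ t : ℝ, 0 < t → t < Real.exp (-Real.exp 1) →
      ℓ t = Real.log (1 / t) * Real.log (Real.log (1 / t)) ^ ((1 : ℝ) + ε))
    (hv : ∀ t : ℝ, 0 < t → t < Real.exp (-Real.exp 1) →
      v t = (t * ℓ t) ^ (1 / α x)) :
    ∃ δ : ℝ, 0 < δ ∧ δ < Real.exp (-Real.exp 1) ∧
      IntegrableOn
        (fun t => sSup ((fun y => (1 / (t * ℓ t)) ^ (α y / α x)) '' {y | |y - x| ≤ v t}))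
        (Set.Ioo 0 δ) :=
  stable_like_integral_test_general α₀ α₁ h0 α hα K hK hrange x ε hε ℓ v hℓ hv
end
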